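/- If W is a unitary on H⊗H satisfying the pentagonal relation W₂₃W₁₂ = W₁₂W₁₃W₂₃ (leg numbering on H⊗H⊗H), then the map Γ(x) = W*(1⊗x)W defines a coassociative comultiplication on B(H): (Γ⊗id)∘Γ = (id⊗Γ)∘Γ. -/

import Mathlib

open TensorProduct

/-!
Write `Ad u x = u⁻¹ x u` (`unitConj`), so that `Γ = Ad W ∘ (1 ⊗ ·)`. Then `(Γ ⊗ id) T = Ad W₁₂ T₂₃`
and `(id ⊗ Γ) T = Ad W₂₃ T₁₃`, so both sides of coassociativity are conjugates of
`x₃ = 1 ⊗ 1 ⊗ x`: `(Γ ⊗ id) Γ x = Ad (W₂₃ W₁₂) x₃` and `(id ⊗ Γ) Γ x = Ad (W₁₃ W₂₃) x₃`.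
By the pentagon relation `W₂₃ W₁₂ = W₁₂ (W₁₃ W₂₃)`, and `W₁₂` commutes with `x₃`.
-/

section UnitConj

variable {M N : Type*} [Monoid M] [Monoid N]

def unitConj (u : Mˣ) (x : M) : M := ↑u⁻¹ * x * ↑u

theorem unitConj_mul (u v : Mˣ) (x : M) : unitConj (u * v) x = unitConj v (unitConj u x) := by
  simp only [unitConj, mul_inv_rev, Units.val_mul, mul_assoc]

theorem unitConj_of_commute {u : Mˣ} {x : M} (h : Commute (u : M) x) : unitConj u x = x := by
  rw [unitConj, mul_assoc, ← h.eq, Units.inv_mul_cancel_left]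

theorem map_unitConj (f : M →* N) (u : Mˣ) (x : M) :
    f (unitConj u x) = unitConj (Units.map f u) (f x) := by
  simp only [unitConj, map_mul, Units.coe_map, Units.coe_map_inv]

theorem unitConj_unitConj_of_pentagon {a b c : Mˣ} {x : M} (hpent : c * a = a * b * c)
    (hax : Commute (a : M) x) : unitConj a (unitConj c x) = unitConj c (unitConj b x) := by
  rw [← unitConj_mul, hpent, unitConj_mul, unitConj_mul, unitConj_of_commute hax]

end UnitConj

theorem Algebra.TensorProduct.assoc_symm_one_tmul {R A B C : Type*} [CommSemiring R] [Semiring A]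
    [Algebra R A] [Semiring B] [Algebra R B] [Semiring C] [Algebra R C] (z : B ⊗[R] C) :
    (Algebra.TensorProduct.assoc R R R A B C).symm (1 ⊗ₜ z) = map includeRight (AlgHom.id R C) z := by
  induction z using TensorProduct.induction_on with
  | zero => rw [tmul_zero, map_zero, map_zero]
  | tmul b c => rfl
  | add u v hu hv => rw [tmul_add, map_add, map_add, hu, hv]

noncomputable section

namespace Stmt1

variable {H : Type*} [NormedAddCommGroup H] [InnerProductSpace ℂ H] [CompleteSpace H]

instance instSemiringLegs : Semiring (((H →L[ℂ] H) ⊗[ℂ] (H →L[ℂ] H)) ⊗[ℂ] (H →L[ℂ] H)) :=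
  @Algebra.TensorProduct.instSemiring ℂ ((H →L[ℂ] H) ⊗[ℂ] (H →L[ℂ] H)) (H →L[ℂ] H) _
    inferInstance inferInstance inferInstance inferInstance

instance instAlgebraLegs : Algebra ℂ (((H →L[ℂ] H) ⊗[ℂ] (H →L[ℂ] H)) ⊗[ℂ] (H →L[ℂ] H)) :=
  @Algebra.TensorProduct.instAlgebra ℂ ((H →L[ℂ] H) ⊗[ℂ] (H →L[ℂ] H)) (H →L[ℂ] H) _
    inferInstance inferInstance inferInstance inferInstance

/-- leg `(1,2)` embedding of `B(H) ⊗ B(H)` into the three-fold tensor product. -/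
def leg12 : ((H →L[ℂ] H) ⊗[ℂ] (H →L[ℂ] H)) →ₐ[ℂ]
    ((H →L[ℂ] H) ⊗[ℂ] (H →L[ℂ] H)) ⊗[ℂ] (H →L[ℂ] H) :=
  Algebra.TensorProduct.includeLeft (R := ℂ) (S := ℂ) (A := (H →L[ℂ] H) ⊗[ℂ] (H →L[ℂ] H))
    (B := H →L[ℂ] H)

/-- leg `(1,3)` embedding. -/
def leg13 : ((H →L[ℂ] H) ⊗[ℂ] (H →L[ℂ] H)) →ₐ[ℂ]
    ((H →L[ℂ] H) ⊗[ℂ] (H →L[ℂ] H)) ⊗[ℂ] (H →L[ℂ] H) :=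
  Algebra.TensorProduct.map Algebra.TensorProduct.includeLeft (AlgHom.id ℂ (H →L[ℂ] H))

/-- leg `(2,3)` embedding. -/
def leg23 : ((H →L[ℂ] H) ⊗[ℂ] (H →L[ℂ] H)) →ₐ[ℂ]
    ((H →L[ℂ] H) ⊗[ℂ] (H →L[ℂ] H)) ⊗[ℂ] (H →L[ℂ] H) :=
  Algebra.TensorProduct.map Algebra.TensorProduct.includeRight (AlgHom.id ℂ (H →L[ℂ] H))

/-- The comultiplication `Γ(x) = W* (1 ⊗ x) W`, as a linear map
`B(H) → B(H) ⊗ B(H)` (for a unitary `W`, `W⁻¹ = W*`). -/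
def comult (W : ((H →L[ℂ] H) ⊗[ℂ] (H →L[ℂ] H))ˣ) :
    (H →L[ℂ] H) →ₗ[ℂ] (H →L[ℂ] H) ⊗[ℂ] (H →L[ℂ] H) :=
  (LinearMap.mulLeft ℂ ((W⁻¹ : ((H →L[ℂ] H) ⊗[ℂ] (H →L[ℂ] H))ˣ) : _)) ∘ₗ
    (LinearMap.mulRight ℂ ((W : ((H →L[ℂ] H) ⊗[ℂ] (H →L[ℂ] H))ˣ) : _)) ∘ₗ
    (Algebra.TensorProduct.includeRight :
      (H →L[ℂ] H) →ₐ[ℂ] (H →L[ℂ] H) ⊗[ℂ] (H →L[ℂ] H)).toLinearMap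

local notation "𝔹" => H →L[ℂ] H
local notation "𝔹₂" => (H →L[ℂ] H) ⊗[ℂ] (H →L[ℂ] H)
local notation "𝔹₃" => ((H →L[ℂ] H) ⊗[ℂ] (H →L[ℂ] H)) ⊗[ℂ] (H →L[ℂ] H)

theorem comult_apply (W : 𝔹₂ˣ) (x : 𝔹) : comult W x = unitConj W (1 ⊗ₜ x) := by
  simp only [comult, unitConj, LinearMap.comp_apply, AlgHom.toLinearMap_apply,
    Algebra.TensorProduct.includeRight_apply, LinearMap.mulRight_apply, LinearMap.mulLeft_apply,
    mul_assoc]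

theorem leg23_comult_apply (W : 𝔹₂ˣ) (x : 𝔹) :
    leg23 (comult W x) = unitConj (Units.map (leg23 (H := H) : 𝔹₂ →* 𝔹₃) W) ((1 : 𝔹₂) ⊗ₜ x) := by
  rw [comult_apply]
  exact map_unitConj (leg23 (H := H) : 𝔹₂ →* 𝔹₃) _ _

theorem leg13_comult_apply (W : 𝔹₂ˣ) (x : 𝔹) :
    leg13 (comult W x) = unitConj (Units.map (leg13 (H := H) : 𝔹₂ →* 𝔹₃) W) ((1 : 𝔹₂) ⊗ₜ x) := by
  rw [comult_apply]
  exact map_unitConj (leg13 (H := H) : 𝔹₂ →* 𝔹₃) _ _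

theorem commute_leg12_one_tmul (u : 𝔹₂) (x : 𝔹) : Commute (leg12 u) ((1 : 𝔹₂) ⊗ₜ[ℂ] x) :=
  (Commute.one_right u).tmul (Commute.one_left x)

theorem map_comult_id_apply (W : 𝔹₂ˣ) (t : 𝔹₂) :
    TensorProduct.map (comult W) LinearMap.id t
      = unitConj (Units.map (leg12 (H := H) : 𝔹₂ →* 𝔹₃) W) (leg23 t) := by
  induction t using TensorProduct.induction_on with
  | zero => simp only [map_zero, unitConj, mul_zero, zero_mul]
  | add s t hs ht => simp only [map_add, hs, ht, unitConj, mul_add, add_mul]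
  | tmul a b =>
    change comult W a ⊗ₜ b
      = ((↑W⁻¹ : 𝔹₂) ⊗ₜ (1 : 𝔹)) * (((1 : 𝔹) ⊗ₜ a) ⊗ₜ b) * ((W : 𝔹₂) ⊗ₜ (1 : 𝔹))
    rw [Algebra.TensorProduct.tmul_mul_tmul, Algebra.TensorProduct.tmul_mul_tmul, one_mul, mul_one,
      comult_apply]
    rfl

theorem assoc_symm_map_id_comult_apply (W : 𝔹₂ˣ) (t : 𝔹₂) :
    (TensorProduct.assoc ℂ 𝔹 𝔹 𝔹).symm (TensorProduct.map LinearMap.id (comult W) t)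
      = unitConj (Units.map (leg23 (H := H) : 𝔹₂ →* 𝔹₃) W) (leg13 t) := by
  induction t using TensorProduct.induction_on with
  | zero => simp only [map_zero, unitConj, mul_zero, zero_mul]
  | add s t hs ht => simp only [map_add, hs, ht, unitConj, mul_add, add_mul]
  | tmul a b =>
    change (Algebra.TensorProduct.assoc ℂ ℂ ℂ 𝔹 𝔹 𝔹).symm (a ⊗ₜ comult W b)
      = leg23 (↑W⁻¹ : 𝔹₂) * ((a ⊗ₜ (1 : 𝔹)) ⊗ₜ b) * leg23 (W : 𝔹₂)
    rw [comult_apply, unitConj, leg23, ← Algebra.TensorProduct.assoc_symm_one_tmul,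
      ← Algebra.TensorProduct.assoc_symm_one_tmul,
      ← Algebra.TensorProduct.assoc_symm_tmul (R := ℂ) (S := ℂ) (T := ℂ), ← map_mul, ← map_mul,
      Algebra.TensorProduct.tmul_mul_tmul, Algebra.TensorProduct.tmul_mul_tmul, one_mul, mul_one]

theorem pentagon_implies_coassociative
    (W : ((H →L[ℂ] H) ⊗[ℂ] (H →L[ℂ] H))ˣ)
    (hpentagon :
      leg23 ((W : ((H →L[ℂ] H) ⊗[ℂ] (H →L[ℂ] H)))) * leg12 ((W : ((H →L[ℂ] H) ⊗[ℂ] (H →L[ℂ] H))))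
        = leg12 ((W : ((H →L[ℂ] H) ⊗[ℂ] (H →L[ℂ] H)))) * leg13 ((W : ((H →L[ℂ] H) ⊗[ℂ] (H →L[ℂ] H))))
            * leg23 ((W : ((H →L[ℂ] H) ⊗[ℂ] (H →L[ℂ] H))))) :
    (TensorProduct.map (comult W) LinearMap.id) ∘ₗ comult W
      = (TensorProduct.assoc ℂ (H →L[ℂ] H) (H →L[ℂ] H) (H →L[ℂ] H)).symm.toLinearMap ∘ₗ
          (TensorProduct.map LinearMap.id (comult W)) ∘ₗ comult W := by
  have hpent : Units.map (leg23 (H := H) : 𝔹₂ →* 𝔹₃) W * Units.map (leg12 (H := H) : 𝔹₂ →* 𝔹₃) W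
      = Units.map (leg12 (H := H) : 𝔹₂ →* 𝔹₃) W * Units.map (leg13 (H := H) : 𝔹₂ →* 𝔹₃) W
        * Units.map (leg23 (H := H) : 𝔹₂ →* 𝔹₃) W :=
    Units.ext hpentagon
  ext x
  simp only [LinearMap.comp_apply, LinearEquiv.coe_coe, map_comult_id_apply,
    assoc_symm_map_id_comult_apply, leg23_comult_apply, leg13_comult_apply]
  exact unitConj_unitConj_of_pentagon hpent (commute_leg12_one_tmul _ x)

end Stmt1
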